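/- arXiv:2510.11318 — 7 statements merged into one kernel-verified Lean document; each statement's English description precedes it below -/
import Mathlib

section
/- Let T be the Tribonacci sequence with T(0)=0, T(1)=1, T(2)=1, T(n)=T(n-1)+T(n-2)+T(n-3) for n≥3. Define sequences β, N1, N00 by the recurrences β(i+1)=β(i)+N1(i)+2·N00(i), N00(i+1)=N1(i-1)+N00(i-1), N1(i+1)=N1(i)+2·N00(i), with base values β(2)=6, β(3)=10, N00(2)=1, N00(3)=2, N1(2)=2, N1(3)=4. Then for all i≥2: β(i)=T(i+2)+T(i)+1, N00(i)=T(i-1)+T(i-2), and N1(i)=2·T(i). -/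
def trib : ℕ → ℕ
  | 0 => 0
  | 1 => 1
  | 2 => 1
  | (n+3) => trib (n+2) + trib (n+1) + trib n

theorem stmt_0 (β N1 N00 : ℕ → ℕ)
    (hβ2 : β 2 = 6) (hβ3 : β 3 = 10)
    (hN002 : N00 2 = 1) (hN003 : N00 3 = 2)
    (hN12 : N1 2 = 2) (hN13 : N1 3 = 4)
    (hβ : ∀ i, 2 ≤ i → β (i+1) = β i + N1 i + 2 * N00 i)
    (hN00 : ∀ i, 3 ≤ i → N00 (i+1) = N1 (i-1) + N00 (i-1))
    (hN1 : ∀ i, 2 ≤ i → N1 (i+1) = N1 i + 2 * N00 i) :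
    ∀ i, 2 ≤ i →
      β i = trib (i+2) + trib i + 1 ∧
      N00 i = trib (i-1) + trib (i-2) ∧
      N1 i = 2 * trib i := by
  have key : ∀ n : ℕ,
      (β (n+2) = trib (n+4) + trib (n+2) + 1 ∧
        N00 (n+2) = trib (n+1) + trib n ∧
        N1 (n+2) = 2 * trib (n+2)) ∧
      (β (n+3) = trib (n+5) + trib (n+3) + 1 ∧
        N00 (n+3) = trib (n+2) + trib (n+1) ∧
        N1 (n+3) = 2 * trib (n+3)) := by
    intro n
    induction n with
    | zero =>
      refine ⟨⟨?_, ?_, ?_⟩, ?_, ?_, ?_⟩ <;>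
        simp [hβ2, hβ3, hN002, hN003, hN12, hN13, trib]
    | succ n ih =>
      obtain ⟨⟨hb2, h002, h12⟩, hb3, h003, h13⟩ := ih
      refine ⟨⟨hb3, h003, h13⟩, ?_, ?_, ?_⟩
      · show β (n+4) = trib (n+6) + trib (n+4) + 1
        have := hβ (n+3) (by omega)
        rw [this, hb3, h003, h13]
        have t6 : trib (n+6) = trib (n+5) + trib (n+4) + trib (n+3) := rfl
        have t5 : trib (n+5) = trib (n+4) + trib (n+3) + trib (n+2) := rfl
        have t4 : trib (n+4) = trib (n+3) + trib (n+2) + trib (n+1) := rfl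
        omega
      · have := hN00 (n+3) (by omega)
        simp only [show n+3-1 = n+2 from rfl] at this
        rw [this, h002, h12]
        show _ = trib (n+2) + trib (n+1) + trib n + trib (n+2)
        omega
      · have := hN1 (n+3) (by omega)
        rw [this, h003, h13]
        show _ = 2 * (trib (n+3) + trib (n+2) + trib (n+1))
        omega
  intro i hi
  obtain ⟨n, rfl⟩ : ∃ n, i = n + 2 := ⟨i - 2, by omega⟩
  simpa using (key n).1
end

section
/- Define c(0)=2, c(1)=4, c(2)=6, c(3)=10, and c(i)=2·c(i-1)−c(i-4) for i≥4. Let T be the Tribonacci sequence. Then c(i)=T(i+2)+T(i)+1 for all i≥0. -/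
theorem stmt_1 (c : ℕ → ℤ)
    (h0 : c 0 = 2) (h1 : c 1 = 4) (h2 : c 2 = 6) (h3 : c 3 = 10)
    (hrec : ∀ i, 4 ≤ i → c i = 2 * c (i-1) - c (i-4)) :
    ∀ i, c i = (trib (i+2) : ℤ) + trib i + 1 := by
  intro i
  induction i using Nat.strong_induction_on with
  | _ i ih =>
    match i with
    | 0 => simp [trib, h0]
    | 1 => norm_num [trib, h1]
    | 2 => norm_num [trib, h2]
    | 3 => norm_num [trib, h3]
    | (n+4) =>
      have h := hrec (n+4) (by omega)
      have e1 : n + 4 - 1 = n + 3 := by omega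
      have e2 : n + 4 - 4 = n := by omega
      rw [e1, e2, ih (n+3) (by omega), ih n (by omega)] at h
      rw [h]
      have t6 : trib (n+6) = trib (n+5) + trib (n+4) + trib (n+3) := rfl
      have t5 : trib (n+5) = trib (n+4) + trib (n+3) + trib (n+2) := rfl
      have t4 : trib (n+4) = trib (n+3) + trib (n+2) + trib (n+1) := rfl
      have t3 : trib (n+3) = trib (n+2) + trib (n+1) + trib n := rfl
      have : n + 4 + 2 = n + 6 := by omega
      rw [this]
      have : n + 3 + 2 = n + 5 := by omega
      rw [this]
      push_cast [t6, t5, t4, t3]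
      ring
end

section
/- Every natural number n can be written uniquely as a sum of distinct Tribonacci numbers T(i) with i≥2, such that no three consecutive Tribonacci numbers are used (i.e., there is no index j with T(j), T(j+1), T(j+2) all appearing in the representation). -/
/-!
If `S` has no three consecutive indices and `max S ≤ k`, then `∑ i ∈ S, trib i < trib (k + 1)`:
split off the top run of `S` (at most `k` and `k - 1`, followed by a gap) and use
`trib (k + 1) = trib k + trib (k - 1) + trib (k - 2)`.
So the largest index of a representation of `n` is the `k` with `trib k ≤ n < trib (k + 1)`, and
uniqueness follows by induction. Conversely (greedy), `n - trib k < trib (k - 1) + trib (k - 2) ≤ trib k`,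
so a representation of `n - trib k` uses only indices below `k`, not both `k - 1` and `k - 2`, and
inserting `k` into it gives a representation of `n`.
-/

theorem trib_add_three (n : ℕ) : trib (n + 3) = trib (n + 2) + trib (n + 1) + trib n := rfl

theorem trib_le_succ : ∀ n, trib n ≤ trib (n + 1)
  | 0 | 1 => by decide
  | n + 2 => by rw [trib_add_three]; omega

theorem trib_mono : Monotone trib := monotone_nat_of_le_succ trib_le_succ

theorem trib_pos {n : ℕ} (hn : 0 < n) : 0 < trib n :=
  lt_of_lt_of_le (by decide) (trib_mono hn)

theorem trib_lt_succ {n : ℕ} (hn : 2 ≤ n) : trib n < trib (n + 1) := by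
  obtain ⟨m, rfl⟩ := Nat.exists_eq_add_of_le' hn
  have := trib_pos (n := m + 1) (by omega)
  rw [trib_add_three]
  omega

theorem trib_succ_add_le : ∀ m, trib (m + 1) + trib m ≤ trib (m + 2)
  | 0 => by decide
  | m + 1 => by
    show trib (m + 2) + trib (m + 1) ≤ trib (m + 3)
    rw [trib_add_three]; omega

theorem exists_trib_le_lt {n : ℕ} (hn : 0 < n) : ∃ k, 2 ≤ k ∧ trib k ≤ n ∧ n < trib (k + 1) := by
  induction n, hn using Nat.le_induction with
  | base => exact ⟨2, le_rfl, by decide, by decide⟩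
  | succ n _ ih =>
    obtain ⟨k, hk, hle, hlt⟩ := ih
    rcases (Nat.succ_le_of_lt hlt).lt_or_eq with hlt' | heq
    · exact ⟨k, hk, hle.trans n.le_succ, hlt'⟩
    · exact ⟨k + 1, hk.trans k.le_succ, heq.ge, heq.trans_lt (trib_lt_succ (by omega))⟩

theorem eq_of_trib_le_lt {a b n : ℕ} (ha : trib a ≤ n) (ha' : n < trib (a + 1))
    (hb : trib b ≤ n) (hb' : n < trib (b + 1)) : a = b := by
  by_contra hne
  rcases Nat.lt_or_gt_of_ne hne with h | h
  · exact (ha'.trans_le (trib_mono h)).not_ge hb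
  · exact (hb'.trans_le (trib_mono h)).not_ge ha

structure IsTribRep (S : Finset ℕ) : Prop where
  two_le : ∀ i ∈ S, 2 ≤ i
  not_three_consecutive : ¬ ∃ j, j ∈ S ∧ j + 1 ∈ S ∧ j + 2 ∈ S

namespace IsTribRep

variable {S T : Finset ℕ}

theorem empty : IsTribRep ∅ := ⟨by simp, by simp⟩

theorem mono (hS : IsTribRep S) (hT : T ⊆ S) : IsTribRep T :=
  ⟨fun i hi => hS.two_le i (hT hi),
    fun ⟨j, h₀, h₁, h₂⟩ => hS.not_three_consecutive ⟨j, hT h₀, hT h₁, hT h₂⟩⟩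

theorem insert {m : ℕ} (hS : IsTribRep S) (hlt : ∀ i ∈ S, i < m + 2)
    (hpair : ¬ (m ∈ S ∧ m + 1 ∈ S)) : IsTribRep (insert (m + 2) S) := by
  refine ⟨?_, ?_⟩
  · simpa using hS.two_le
  · rintro ⟨j, h₀, h₁, h₂⟩
    simp only [Finset.mem_insert] at h₀ h₁ h₂
    have hj₀ : j ∈ S := h₀.resolve_left fun h => by have := hlt _ (h₁.resolve_left (by omega)); omega
    have hj₁ : j + 1 ∈ S := h₁.resolve_left fun h => by have := hlt _ (h₂.resolve_left (by omega)); omega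
    rcases h₂ with h | hj₂
    · obtain rfl : j = m := by omega
      exact hpair ⟨hj₀, hj₁⟩
    · exact hS.not_three_consecutive ⟨j, hj₀, hj₁, hj₂⟩

theorem sum_trib_lt (hS : IsTribRep S) {k : ℕ} (hk : ∀ i ∈ S, i ≤ k) :
    ∑ i ∈ S, trib i < trib (k + 1) := by
  induction k using Nat.strong_induction_on generalizing S with
  | _ k ih =>
  obtain hk2 | ⟨m, rfl⟩ : k < 2 ∨ ∃ m, k = m + 2 := by
    rcases Nat.lt_or_ge k 2 with h | h
    exacts [.inl h, .inr (Nat.exists_eq_add_of_le' h)]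
  · have : S = ∅ := Finset.eq_empty_of_forall_notMem fun i hi => by
      have := hS.two_le i hi; have := hk i hi; omega
    subst this
    exact trib_pos k.succ_pos
  show _ < trib (m + 3)
  by_cases htop : m + 2 ∈ S
  swap
  · have hk' : ∀ i ∈ S, i ≤ m + 1 := fun i hi => by
      have := hk i hi; have : i ≠ m + 2 := by rintro rfl; exact htop hi
      omega
    exact (ih (m + 1) (by omega) hS hk').trans_le (trib_le_succ _)
  rw [← Finset.add_sum_erase S trib htop]
  by_cases hnext : m + 1 ∈ S
  · obtain ⟨p, hp⟩ : ∃ p, m = p + 1 := Nat.exists_eq_add_of_le' (by have := hS.two_le _ hnext; omega)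
    have hnext' : m + 1 ∈ S.erase (m + 2) := Finset.mem_erase.2 ⟨by omega, hnext⟩
    have hrest : ∀ i ∈ (S.erase (m + 2)).erase (m + 1), i ≤ p := fun i hi => by
      obtain ⟨hi₁, hi₂, hiS⟩ : i ≠ m + 1 ∧ i ≠ m + 2 ∧ i ∈ S := by simpa using hi
      have : i ≠ m := by rintro rfl; exact hS.not_three_consecutive ⟨i, hiS, hnext, htop⟩
      have := hk i hiS; omega
    have := ih p (by omega) (hS.mono ((Finset.erase_subset _ _).trans (Finset.erase_subset _ _))) hrest
    rw [← hp] at this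
    rw [← Finset.add_sum_erase _ trib hnext', trib_add_three]
    omega
  · have hrest : ∀ i ∈ S.erase (m + 2), i ≤ m := fun i hi => by
      obtain ⟨hi₂, hiS⟩ : i ≠ m + 2 ∧ i ∈ S := by simpa using hi
      have : i ≠ m + 1 := by rintro rfl; exact hnext hiS
      have := hk i hiS; omega
    have := ih m (by omega) (hS.mono (Finset.erase_subset _ _)) hrest
    have : trib (m + 2) + trib (m + 1) ≤ trib (m + 3) := trib_succ_add_le (m + 1)
    omega

theorem eq_of_sum_trib_eq (hS : IsTribRep S) (hT : IsTribRep T)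
    (hsum : ∑ i ∈ S, trib i = ∑ i ∈ T, trib i) : S = T := by
  induction S using Finset.induction_on_max generalizing T with
  | empty =>
    refine (Finset.eq_empty_of_forall_notMem fun i hi => ?_).symm
    have := Finset.single_le_sum_of_canonicallyOrdered (f := trib) hi
    have := trib_pos (n := i) (by have := hT.two_le i hi; omega)
    rw [Finset.sum_empty] at hsum
    omega
  | insert a s hlt ih =>
    have ha_notMem : a ∉ s := fun h => (hlt a h).false
    rw [Finset.sum_insert ha_notMem] at hsum
    have hpos := trib_pos (n := a) (by have := hS.two_le a (s.mem_insert_self a); omega)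
    have hTne : T.Nonempty := Finset.nonempty_iff_ne_empty.2 fun h => by simp [h] at hsum; omega
    have hbT : T.max' hTne ∈ T := T.max'_mem hTne
    have hab : a = T.max' hTne := by
      refine eq_of_trib_le_lt (n := ∑ i ∈ T, trib i) (by omega) ?_
        (Finset.single_le_sum_of_canonicallyOrdered hbT) (hT.sum_trib_lt (T.le_max' · ·))
      rw [← hsum, ← Finset.sum_insert ha_notMem]
      exact hS.sum_trib_lt fun i hi => (Finset.mem_insert.1 hi).elim le_of_eq fun h => (hlt i h).le
    rw [← hab] at hbT
    have hrest : s = T.erase a := ih (hS.mono (s.subset_insert a)) (hT.mono (T.erase_subset a)) <| by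
      have := Finset.add_sum_erase T trib hbT
      omega
    rw [hrest, Finset.insert_erase hbT]

end IsTribRep

theorem exists_isTribRep_sum_eq (n : ℕ) : ∃ S, IsTribRep S ∧ ∑ i ∈ S, trib i = n := by
  induction n using Nat.strong_induction_on with
  | _ n ih =>
  rcases n.eq_zero_or_pos with rfl | hn
  · exact ⟨∅, IsTribRep.empty, rfl⟩
  obtain ⟨k, hk, hle, hlt⟩ := exists_trib_le_lt hn
  obtain ⟨m, rfl⟩ := Nat.exists_eq_add_of_le' hk
  have hrec : trib (m + 2 + 1) = trib (m + 2) + trib (m + 1) + trib m := trib_add_three m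
  have hdom := trib_succ_add_le m
  obtain ⟨S, hS, hsum⟩ := ih (n - trib (m + 2)) (by have := trib_pos (n := m + 2) (by omega); omega)
  have hlt : ∀ i ∈ S, i < m + 2 := fun i hi => by
    by_contra h
    have := trib_mono (not_lt.1 h)
    have := Finset.single_le_sum_of_canonicallyOrdered (f := trib) hi
    omega
  have hpair : ¬ (m ∈ S ∧ m + 1 ∈ S) := fun ⟨h₀, h₁⟩ => by
    have := Finset.sum_le_sum_of_subset (f := trib)
      (Finset.insert_subset h₀ (Finset.singleton_subset_iff.2 h₁))
    rw [Finset.sum_pair (by omega)] at this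
    omega
  refine ⟨_, hS.insert hlt hpair, ?_⟩
  rw [Finset.sum_insert fun h => (hlt _ h).false, hsum]
  omega

theorem stmt_3 (n : ℕ) :
    ∃! S : Finset ℕ,
      (∀ i ∈ S, 2 ≤ i) ∧
      n = ∑ i ∈ S, trib i ∧
      ¬ ∃ j, j ∈ S ∧ j + 1 ∈ S ∧ j + 2 ∈ S := by
  obtain ⟨S, hS, hsum⟩ := exists_isTribRep_sum_eq n
  refine ⟨S, ⟨hS.two_le, hsum.symm, hS.not_three_consecutive⟩, ?_⟩
  rintro T ⟨hT₂, hTsum, hT₃⟩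
  exact IsTribRep.eq_of_sum_trib_eq ⟨hT₂, hT₃⟩ hS (hTsum.symm.trans hsum.symm)
end

section
/- Let ψ be the real root of X³−X²−X−1. For all n ≥ 2, |T(n) − c₁ψⁿ| < 0.29, where c₁ = 1/(−ψ² + 4ψ − 1). -/
/-- For `e (k + 2) = s * e (k + 1) - r * e k` this is the norm `(y - α x) (y - β x)`, where `α, β`
are the roots of `X² - s X + r`. -/
def cassiniForm (s r x y : ℝ) : ℝ := y ^ 2 - s * x * y + r * x ^ 2

section CassiniForm

variable {s r : ℝ} {e : ℕ → ℝ}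

theorem cassiniForm_succ (h : ∀ k, e (k + 2) = s * e (k + 1) - r * e k) (k : ℕ) :
    cassiniForm s r (e (k + 1)) (e (k + 2)) = r * cassiniForm s r (e k) (e (k + 1)) := by
  rw [cassiniForm, cassiniForm, h k]
  ring

theorem cassiniForm_eq_pow_mul (h : ∀ k, e (k + 2) = s * e (k + 1) - r * e k) (k : ℕ) :
    cassiniForm s r (e k) (e (k + 1)) = r ^ k * cassiniForm s r (e 0) (e 1) := by
  induction k with
  | zero => simp
  | succ k ih => rw [cassiniForm_succ h, ih, pow_succ']; ring

theorem mul_sq_le_cassiniForm (s r x y : ℝ) : (r - s ^ 2 / 4) * x ^ 2 ≤ cassiniForm s r x y := by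
  have : cassiniForm s r x y = (y - s * x / 2) ^ 2 + (r - s ^ 2 / 4) * x ^ 2 := by
    rw [cassiniForm]; ring
  rw [this]
  exact le_add_of_nonneg_left (sq_nonneg _)

theorem sq_le_of_cassiniForm (h : ∀ k, e (k + 2) = s * e (k + 1) - r * e k)
    (hr₀ : 0 ≤ r) (hr₁ : r ≤ 1) (hsr : s ^ 2 < 4 * r) {m k : ℕ} (hmk : m ≤ k) :
    e k ^ 2 ≤ r ^ m * cassiniForm s r (e 0) (e 1) / (r - s ^ 2 / 4) := by
  have hpos : 0 < r - s ^ 2 / 4 := by linarith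
  have hQ : 0 ≤ cassiniForm s r (e 0) (e 1) := by
    nlinarith [mul_sq_le_cassiniForm s r (e 0) (e 1), sq_nonneg (e 0)]
  rw [le_div_iff₀ hpos, mul_comm]
  calc (r - s ^ 2 / 4) * e k ^ 2 ≤ cassiniForm s r (e k) (e (k + 1)) :=
        mul_sq_le_cassiniForm s r _ _
    _ = r ^ k * cassiniForm s r (e 0) (e 1) := cassiniForm_eq_pow_mul h k
    _ ≤ r ^ m * cassiniForm s r (e 0) (e 1) :=
        mul_le_mul_of_nonneg_right (pow_le_pow_of_le_one hr₀ hr₁ hmk) hQ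

end CassiniForm

section TribonacciRoot

variable {ψ : ℝ}

/-- `X³ - X² - X - 1 = (X - ψ) (X² - (1 - ψ) X + (ψ² - ψ - 1))`, so the defect
`u (k + 2) - (1 - ψ) u (k + 1) + (ψ² - ψ - 1) u k` is multiplied by `ψ` at each step. -/
theorem reduce_tribonacci_recurrence (hψ : ψ ^ 3 = ψ ^ 2 + ψ + 1) {u : ℕ → ℝ}
    (hu : ∀ k, u (k + 3) = u (k + 2) + u (k + 1) + u k)
    (h₀ : u 2 = (1 - ψ) * u 1 - (ψ ^ 2 - ψ - 1) * u 0) (k : ℕ) :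
    u (k + 2) = (1 - ψ) * u (k + 1) - (ψ ^ 2 - ψ - 1) * u k := by
  induction k with
  | zero => exact h₀
  | succ k ih => linear_combination hu k + ψ * ih - u k * hψ

theorem cast_trib_add_three (n : ℕ) :
    (trib (n + 3) : ℝ) = trib (n + 2) + trib (n + 1) + trib n := by
  rw [trib]; push_cast; rfl

theorem trib_sub_mul_pow_add_three (hψ : ψ ^ 3 = ψ ^ 2 + ψ + 1) (c : ℝ) (k : ℕ) :
    (trib (k + 3) : ℝ) - c * ψ ^ (k + 3) = ((trib (k + 2) : ℝ) - c * ψ ^ (k + 2))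
      + ((trib (k + 1) : ℝ) - c * ψ ^ (k + 1)) + ((trib k : ℝ) - c * ψ ^ k) := by
  linear_combination cast_trib_add_three k - c * ψ ^ k * hψ

theorem one_div_eq_of_tribonacci_root (hψ : ψ ^ 3 = ψ ^ 2 + ψ + 1) :
    1 / (-ψ ^ 2 + 4 * ψ - 1) = (5 * ψ ^ 2 - 3 * ψ - 4) / 22 := by
  have h : (-ψ ^ 2 + 4 * ψ - 1) * (5 * ψ ^ 2 - 3 * ψ - 4) = 22 := by
    linear_combination (-5 * ψ + 18) * hψ
  have hne : -ψ ^ 2 + 4 * ψ - 1 ≠ 0 := left_ne_zero_of_mul (by rw [h]; norm_num)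
  rw [div_eq_div_iff hne (by norm_num)]
  linarith

theorem bounds_of_tribonacci_root (hψ : ψ ^ 3 = ψ ^ 2 + ψ + 1) : 1.839 < ψ ∧ ψ < 1.8395 := by
  constructor <;>
    nlinarith [sq_nonneg (ψ + 0.42), sq_nonneg (ψ - 1.839), sq_nonneg (ψ - 1.8395), sq_nonneg ψ]

end TribonacciRoot

theorem stmt_6 (ψ : ℝ) (hψ : ψ^3 = ψ^2 + ψ + 1)
    (c₁ : ℝ) (hc₁ : c₁ = 1 / (-ψ^2 + 4*ψ - 1)) :
    ∀ n : ℕ, 2 ≤ n → |(trib n : ℝ) - c₁ * ψ^n| < 0.29 := by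
  intro n hn
  rw [one_div_eq_of_tribonacci_root hψ] at hc₁
  obtain ⟨hψ₀, hψ₁⟩ := bounds_of_tribonacci_root hψ
  set e : ℕ → ℝ := fun k => (trib k : ℝ) - c₁ * ψ ^ k
  have he : ∀ k, e (k + 2) = (1 - ψ) * e (k + 1) - (ψ ^ 2 - ψ - 1) * e k :=
    reduce_tribonacci_recurrence hψ (trib_sub_mul_pow_add_three hψ c₁) (by
      simp only [e, trib, hc₁]; push_cast
      linear_combination (-(15 * ψ - 4) / 22) * hψ)
  have hQ : cassiniForm (1 - ψ) (ψ ^ 2 - ψ - 1) (e 0) (e 1) = (ψ ^ 2 - 5 * ψ + 8) / 22 := by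
    simp only [cassiniForm, e, trib, hc₁]; push_cast
    linear_combination (-51 / 121 - 12 / 121 * ψ - 65 / 484 * ψ ^ 2 + 75 / 484 * ψ ^ 3) * hψ
  have hsq := sq_le_of_cassiniForm he (by nlinarith) (by nlinarith) (by nlinarith) hn
  rw [hQ] at hsq
  have hlt : e n ^ 2 < 0.29 ^ 2 := hsq.trans_lt (by
    rw [div_lt_iff₀ (by nlinarith)]
    nlinarith [mul_pos (sub_pos.2 hψ₀) (sub_pos.2 hψ₁)])
  exact abs_lt_of_sq_lt_sq hlt (by norm_num)
end

section
/- Let ψ be the real root of X³−X²−X−1. For all n ≥ 0, ψ ≤ (T(n+5) − 1)/(T(n+4) − 1), where T is the Tribonacci sequence. -/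
lemma trib_ge_one : ∀ n : ℕ, 1 ≤ trib (n+1) ∧ 1 ≤ trib (n+2) := by
  intro n
  induction n with
  | zero => exact ⟨le_refl 1, le_refl 1⟩
  | succ n ih =>
    obtain ⟨h1, h2⟩ := ih
    refine ⟨h2, ?_⟩
    show 1 ≤ trib (n+3)
    have h : trib (n+3) = trib (n+2) + trib (n+1) + trib n := rfl
    omega

theorem stmt_7 (ψ : ℝ) (hψ : ψ^3 = ψ^2 + ψ + 1) :
    ∀ n : ℕ, ψ ≤ ((trib (n+5) : ℝ) - 1) / ((trib (n+4) : ℝ) - 1) := by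
  have hψ2 : ψ < 2 := by nlinarith [sq_nonneg (ψ - 2), sq_nonneg ψ, sq_nonneg (ψ+1)]
  have hψ1 : 1 < ψ := by nlinarith [sq_nonneg ψ, sq_nonneg (ψ-1), sq_nonneg (ψ+1)]
  have key : ∀ n : ℕ, ψ * ((trib (n+2):ℝ)-1) ≤ (trib (n+3):ℝ)-1 ∧
      ψ * ((trib (n+3):ℝ)-1) ≤ (trib (n+4):ℝ)-1 ∧
      ψ * ((trib (n+4):ℝ)-1) ≤ (trib (n+5):ℝ)-1 := by
    intro n
    induction n with
    | zero =>
      have h2 : trib 2 = 1 := rfl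
      have h3 : trib 3 = 2 := rfl
      have h4 : trib 4 = 4 := rfl
      have h5 : trib 5 = 7 := rfl
      rw [h2, h3, h4, h5]
      push_cast
      refine ⟨by nlinarith, by nlinarith, by nlinarith⟩
    | succ n ih =>
      obtain ⟨h1, h2, h3⟩ := ih
      refine ⟨h2, h3, ?_⟩
      show ψ * ((trib (n+5):ℝ)-1) ≤ (trib (n+6):ℝ)-1
      have r1 : trib (n+6) = trib (n+5) + trib (n+4) + trib (n+3) := rfl
      have r2 : trib (n+5) = trib (n+4) + trib (n+3) + trib (n+2) := rfl
      have hx : (1:ℝ) ≤ (trib (n+2) : ℝ) := by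
        exact_mod_cast ((trib_ge_one (n+1)).1 : 1 ≤ trib (n+2))
      rw [r1, r2] at *
      push_cast at *
      set x := (trib (n+2) : ℝ)
      set y := (trib (n+3) : ℝ)
      set z := (trib (n+4) : ℝ)
      nlinarith [mul_nonneg (by linarith : (0:ℝ) ≤ 2 - ψ) (by linarith : (0:ℝ) ≤ (z-1) - ψ*(y-1)),
        mul_nonneg (mul_nonneg (by linarith : (0:ℝ) ≤ 2 - ψ) (by linarith : (0:ℝ) ≤ ψ)) (by linarith : (0:ℝ) ≤ (y-1) - ψ*(x-1)),
        mul_nonneg (by linarith : (0:ℝ) ≤ x - 1) (by nlinarith : (0:ℝ) ≤ ψ^2 + ψ + 1 - ψ^3 + 0)]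
  intro n
  have hk := (key n).2.2
  have hpos : (2:ℕ) ≤ trib (n+4) := by
    have h1 : 1 ≤ trib (n+3) := (trib_ge_one (n+2)).1
    have h2 : 1 ≤ trib (n+2) := (trib_ge_one (n+1)).1
    have r : trib (n+4) = trib (n+3) + trib (n+2) + trib (n+1) := rfl
    omega
  have hposR : (1:ℝ) ≤ (trib (n+4) : ℝ) - 1 := by
    have : (2:ℝ) ≤ (trib (n+4) : ℝ) := by exact_mod_cast hpos
    linarith
  rw [le_div_iff₀ (by linarith)]
  linarith [hk]
end

section
/- Let TR be the Tribonacci word, the fixed point of φ: 0↦01, 1↦02, 2↦0, and let f be the morphism 0↦10, 1↦0, 2↦1. Then f(TR) = π(TR), where π: 0↦100, 1↦101, 2↦10; equivalently, applying f to TR yields the same infinite binary word as applying π to TR. -/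
def phiM : Fin 3 → List (Fin 3) := ![[0, 1], [0, 2], [0]]
def fM : Fin 3 → List (Fin 2) := ![[1, 0], [0], [1]]
def piM : Fin 3 → List (Fin 2) := ![[1, 0, 0], [1, 0, 1], [1, 0]]

/-- The prefix of length `n` of an infinite word `u`. -/
def pref {α : Type*} (u : ℕ → α) (n : ℕ) : List α := (List.range n).map u

/- Since `f (φ a) = π a` for every letter `a`, we get `π(TR) = f(φ(TR)) = f(TR)`; prefixes of one
infinite word are comparable. -/

lemma pref_isPrefix_pref {α : Type*} (u : ℕ → α) {m n : ℕ} (h : m ≤ n) :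
    pref u m <+: pref u n := by
  have hrange : List.range m = (List.range n).take m := by
    rw [List.take_range, min_eq_left h]
  exact (hrange ▸ List.take_prefix m (List.range n)).map u

lemma flatMap_fM_phiM (a : Fin 3) : (phiM a).flatMap fM = piM a := by
  fin_cases a <;> rfl

lemma flatMap_phiM_flatMap_fM (w : List (Fin 3)) :
    (w.flatMap phiM).flatMap fM = w.flatMap piM := by
  simp only [List.flatMap_assoc, flatMap_fM_phiM]

theorem stmt_11_general (TR : ℕ → Fin 3)
    (hfix : ∀ n : ℕ,
      (pref TR n).flatMap phiM = pref TR ((pref TR n).flatMap phiM).length) :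
    ∀ m n : ℕ,
      (pref TR m).flatMap fM <+: (pref TR n).flatMap piM ∨
      (pref TR n).flatMap piM <+: (pref TR m).flatMap fM := by
  intro m n
  set N := ((pref TR n).flatMap phiM).length
  have hpi : (pref TR n).flatMap piM = (pref TR N).flatMap fM := by
    rw [← hfix n, flatMap_phiM_flatMap_fM]
  rw [hpi]
  rcases le_total m N with h | h
  · exact .inl ((pref_isPrefix_pref TR h).flatMap fM)
  · exact .inr ((pref_isPrefix_pref TR h).flatMap fM)

theorem stmt_11 (TR : ℕ → Fin 3)
    (h0 : TR 0 = 0)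
    (hfix : ∀ n : ℕ,
      (pref TR n).flatMap phiM = pref TR ((pref TR n).flatMap phiM).length) :
    ∀ m n : ℕ,
      (pref TR m).flatMap fM <+: (pref TR n).flatMap piM ∨
      (pref TR n).flatMap piM <+: (pref TR m).flatMap fM :=
  stmt_11_general TR hfix
end

section
/- Let b be the sequence of bispecial factors of the Tribonacci word defined by b(0) = "0" and b(n) = φ(b(n−1))·"0" for n ≥ 1, where φ: 0↦01, 1↦02, 2↦0. Then for n ≥ 0, the Parikh vector of b(n) is ½·(T(n+3)+T(n+1)−1, T(n+2)+T(n)−1, T(n+1)+T(n−1)−1), where T is the Tribonacci sequence, with T(−1) defined by extending the Tribonacci recurrence backwards (so that for n=0 the vector is (1,0,0)). -/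
/-- The sequence of nonempty bispecial factors of the Tribonacci word. -/
def bsp : ℕ → List (Fin 3)
  | 0 => [0]
  | (n+1) => (bsp n).flatMap phiM ++ [0]

lemma flatMap_counts (l : List (Fin 3)) :
    (l.flatMap phiM).count 0 = l.length ∧
    (l.flatMap phiM).count 1 = l.count 0 ∧
    (l.flatMap phiM).count 2 = l.count 1 := by
  induction l with
  | nil => simp
  | cons h t ih =>
    obtain ⟨ih0, ih1, ih2⟩ := ih
    fin_cases h <;>
      simp only [List.flatMap_cons, phiM, List.count_cons, List.count_append,
        Matrix.cons_val_zero, Matrix.cons_val_one, Matrix.head_cons,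
        Matrix.cons_val_two, Matrix.tail_cons] at ih0 ih1 ih2 ⊢ <;>
      simp_all <;> omega

lemma len_eq (l : List (Fin 3)) :
    l.length = l.count 0 + l.count 1 + l.count 2 := by
  induction l with
  | nil => simp
  | cons h t ih =>
    fin_cases h <;> simp [List.count_cons, ih] <;> omega

theorem stmt_12 :
    ((bsp 0).count 0 = 1 ∧ (bsp 0).count 1 = 0 ∧ (bsp 0).count 2 = 0) ∧
    ∀ n : ℕ, 1 ≤ n →
      2 * (bsp n).count 0 + 1 = trib (n+3) + trib (n+1) ∧
      2 * (bsp n).count 1 + 1 = trib (n+2) + trib n ∧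
      2 * (bsp n).count 2 + 1 = trib (n+1) + trib (n-1) := by
  refine ⟨by decide, ?_⟩
  intro n hn
  induction n with
  | zero => omega
  | succ m ih =>
    rcases Nat.eq_or_lt_of_le hn with h | h
    · -- m = 0, so n = 1
      have : m = 0 := by omega
      subst this
      decide
    · have hm : 1 ≤ m := by omega
      obtain ⟨i0, i1, i2⟩ := ih hm
      obtain ⟨f0, f1, f2⟩ := flatMap_counts (bsp m)
      have hl := len_eq (bsp m)
      have e0 : (bsp (m+1)).count 0 = (bsp m).length + 1 := by
        simp [bsp, List.count_append, f0]
      have e1 : (bsp (m+1)).count 1 = (bsp m).count 0 := by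
        simp [bsp, List.count_append, f1]
      have e2 : (bsp (m+1)).count 2 = (bsp m).count 1 := by
        simp [bsp, List.count_append, f2]
      obtain ⟨k, hk⟩ : ∃ k, m = k + 1 := ⟨m - 1, by omega⟩
      subst hk
      have t1 : trib (k+1+1+3) = trib (k+4) + trib (k+3) + trib (k+2) := rfl
      have t2 : trib (k+3) = trib (k+2) + trib (k+1) + trib k := rfl
      have t3 : trib (k+1+1+2) = trib (k+4) := rfl
      have t4 : trib (k+1+1+1) = trib (k+3) := rfl
      have t5 : trib (k+1+1) = trib (k+2) := rfl
      have t6 : trib (k+1+3) = trib (k+4) := rfl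
      have t7 : trib (k+1+2) = trib (k+3) := rfl
      have t8 : trib (k+4) = trib (k+3) + trib (k+2) + trib (k+1) := rfl
      have t10 : trib (k+1-1) = trib k := rfl
      have t9 : trib (k+1+1-1) = trib (k+1) := rfl
      refine ⟨?_, ?_, ?_⟩
      · omega
      · rw [e1, t3, ← t6]; exact i0
      · rw [e2, t4, ← t7, t9]; exact i1
end
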